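/- Let C be a t×n binary code satisfying: (i) for any two sets D1, D2 ⊆ {1,…,n} with |D1| = |D2| = d and |D1 ∩ D2| = d − 1, the Boolean sums ∨_{i∈D1} c_i and ∨_{i∈D2} c_i are distinct; and (ii) C is a disjunctive list-decoding code of strength d and list-size at most 1, i.e., the Boolean sum of the columns of any d-element subset covers at most 1 column whose index is not in that subset. Then C is a (=d)-union-free code. -/

import Mathlib

open Finset

/-- The Boolean sum (componentwise OR) of the columns of `C` indexed by `S`. -/
noncomputable def boolSum {t n : ℕ} (C : Fin t → Fin n → Bool) (S : Finset (Fin n)) : Fin t → Bool :=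
  fun r => S.sup fun i => C r i

/-- `covers x y` : the vector `x` covers the vector `y`, i.e. `x ∨ y = x`. -/
def covers {t : ℕ} (x y : Fin t → Bool) : Prop := ∀ r, y r = true → x r = true

instance {t : ℕ} (x y : Fin t → Bool) : Decidable (covers x y) := by
  unfold covers; infer_instance

/-- `C` is `d`-disjunctive: the Boolean sum of any `d` columns covers no other column. -/
def Disjunctive {t n : ℕ} (d : ℕ) (C : Fin t → Fin n → Bool) : Prop :=
  ∀ D : Finset (Fin n), D.card = d → ∀ j ∉ D, ¬ covers (boolSum C D) (fun i => C i j)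

/-- `C` is a strongly `d`-separable matrix. -/
def SSM {t n : ℕ} (d : ℕ) (C : Fin t → Fin n → Bool) : Prop :=
  ∀ D0 : Finset (Fin n), D0.card = d →
    {i : Fin n | ∀ D' : Finset (Fin n), boolSum C D' = boolSum C D0 → i ∈ D'} = ↑D0

/-- `C` is a `(=d)`-union-free code. -/
def UnionFreeEq {t n : ℕ} (d : ℕ) (C : Fin t → Fin n → Bool) : Prop :=
  ∀ D1 D2 : Finset (Fin n), D1.card = d → D2.card = d → D1 ≠ D2 →
    boolSum C D1 ≠ boolSum C D2

/-- `C` is a `(≤d)`-union-free code. -/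
def UnionFreeLe {t n : ℕ} (d : ℕ) (C : Fin t → Fin n → Bool) : Prop :=
  ∀ D1 D2 : Finset (Fin n), D1.card ≤ d → D2.card ≤ d → D1 ≠ D2 →
    boolSum C D1 ≠ boolSum C D2

/-- The number of columns of `C` covered by the vector `r`. -/
def coveredCount {t n : ℕ} (C : Fin t → Fin n → Bool) (r : Fin t → Bool) : ℕ :=
  (Finset.univ.filter fun j : Fin n => covers r (fun i => C i j)).card

/-- `C` is a `(=d)`-union-free code with fast decoding. -/
def UFFDEq {t n : ℕ} (d : ℕ) (C : Fin t → Fin n → Bool) : Prop :=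
  UnionFreeEq d C ∧
    ∀ D : Finset (Fin n), D.card = d →
      (coveredCount C (boolSum C D) : ℝ) ≤ (n : ℝ) ^ ((1 : ℝ) / d)

/-- `C` is a `(≤d)`-union-free code with fast decoding. -/
def UFFDLe {t n : ℕ} (d : ℕ) (C : Fin t → Fin n → Bool) : Prop :=
  UnionFreeLe d C ∧
    ∀ D : Finset (Fin n), D.card ≤ d →
      (coveredCount C (boolSum C D) : ℝ) ≤ (n : ℝ) ^ ((1 : ℝ) / d)

theorem covers_boolSum_of_mem {t n : ℕ} (C : Fin t → Fin n → Bool) {S : Finset (Fin n)}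
    {j : Fin n} (hj : j ∈ S) : covers (boolSum C S) (fun i => C i j) := by
  intro r hr
  have hle : C r j ≤ boolSum C S r := Finset.le_sup (f := fun i => C r i) hj
  rw [show C r j = true from hr] at hle
  exact top_le_iff.mp hle

theorem sdiff_subset_filter_covers_of_boolSum_eq {t n : ℕ} (C : Fin t → Fin n → Bool)
    {A B : Finset (Fin n)} (hAB : boolSum C A = boolSum C B) :
    A \ B ⊆ univ.filter fun j => j ∉ B ∧ covers (boolSum C B) (fun i => C i j) := by
  intro j hj
  rw [mem_sdiff] at hj
  rw [mem_filter, ← hAB]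
  exact ⟨mem_univ j, hj.2, covers_boolSum_of_mem C hj.1⟩

theorem Finset.card_inter_add_one_of_card_sdiff_le_one {α : Type*} [DecidableEq α]
    {A B : Finset α} (hcard : A.card = B.card) (hne : A ≠ B) (hsdiff : (A \ B).card ≤ 1) :
    (A ∩ B).card + 1 = A.card := by
  have hpos : 0 < (A \ B).card :=
    card_pos.mpr <| sdiff_nonempty.mpr fun hsub => hne (eq_of_subset_of_card_le hsub hcard.ge)
  have := card_sdiff_add_card_inter A B
  omega

/-- A code separating `d`-sets intersecting in exactly `d - 1` elements which is also a
disjunctive list-decoding code of strength `d` and list-size at most `1` is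
`(=d)`-union-free. -/
theorem unionFreeEq_of_conditions {t n d : ℕ} (C : Fin t → Fin n → Bool)
    (hSep : ∀ D1 D2 : Finset (Fin n), D1.card = d → D2.card = d →
      (D1 ∩ D2).card + 1 = d → boolSum C D1 ≠ boolSum C D2)
    (hList : ∀ D : Finset (Fin n), D.card = d →
      (Finset.univ.filter fun j : Fin n =>
        j ∉ D ∧ covers (boolSum C D) (fun i => C i j)).card ≤ 1) :
    UnionFreeEq d C := by
  intro D1 D2 h1 h2 hne hsum
  have hsdiff : (D1 \ D2).card ≤ 1 :=
    (card_le_card (sdiff_subset_filter_covers_of_boolSum_eq C hsum)).trans (hList D2 h2)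
  have hinter : (D1 ∩ D2).card + 1 = d :=
    h1 ▸ card_inter_add_one_of_card_sdiff_le_one (h1.trans h2.symm) hne hsdiff
  exact hSep D1 D2 h1 h2 hinter hsum
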